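/- Let V₈ be an 8-dimensional complex vector space, let U₄ ⊆ U₆ ⊆ V₈ be subspaces with dim U₄ = 4, dim U₆ = 6, and let y ∈ ⋀³V₈. Then y ∈ ⋀²U₄∧V₈ + ⋀³U₆ if and only if for every linear form η ∈ V₈* vanishing on U₆, the contraction ι_η y lies in the image of ⋀²U₄ in ⋀²V₈. -/

import Mathlib

/-!
For `η` vanishing on `U₆` and `w` with `η w = -1`, the transvection `v ↦ v + η v • w` is the
projection onto `ker η` along `w`, and the algebra map it induces on the exterior algebra is
`y ↦ y + w ∧ ι_η y`. If `y` satisfies the contraction condition, the correction term `w ∧ ι_η y`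
lies in `V ∧ ⋀²U₄`, and the projected element satisfies the condition again, because
`ι_η' ι_η y ∈ ι_η' (⋀²U₄) = 0`. Cutting `V` down to `U₆` one hyperplane at a time therefore
leaves an element of `⋀³U₆`.
-/

open ExteriorAlgebra

noncomputable section

variable {V : Type*} [AddCommGroup V] [Module ℂ V]

/-- For subspaces `S, T, U` of a complex vector space `W`, the subspace `S∧T∧U` of `⋀³W`,
realized as the span, inside the exterior algebra, of all products `s∧t∧u` with
`s ∈ S`, `t ∈ T`, `u ∈ U`. In particular `wSpan S S ⊤ = ⋀²S∧W`, `wSpan S S S = ⋀³S`. -/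
def wSpan (S T U : Submodule ℂ V) : Submodule ℂ (ExteriorAlgebra ℂ V) :=
  Submodule.span ℂ {x | ∃ s ∈ S, ∃ t ∈ T, ∃ u ∈ U, x = ι ℂ s * ι ℂ t * ι ℂ u}

/-- For a subspace `S` of a complex vector space `W`, the image of `⋀²S` in `⋀²W`, realized as
the span, inside the exterior algebra, of all products `s∧s'` with `s, s' ∈ S`. -/
def wSpan2 (S : Submodule ℂ V) : Submodule ℂ (ExteriorAlgebra ℂ V) :=
  Submodule.span ℂ {x | ∃ s ∈ S, ∃ t ∈ S, x = ι ℂ s * ι ℂ t}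

namespace ExteriorAlgebra

variable {R M : Type*} [CommRing R] [AddCommGroup M] [Module R M]

theorem ι_mul_ι_anticomm (x y : M) : ι R x * ι R y = -(ι R y * ι R x) :=
  eq_neg_of_add_eq_zero_left (ι_add_mul_swap x y)

theorem map_transvection_apply (f : Module.Dual R M) (v : M) (x : ExteriorAlgebra R M) :
    map (LinearMap.transvection f v) x = x + ι R v * CliffordAlgebra.contractLeft f x := by
  induction x using CliffordAlgebra.left_induction with
  | algebraMap r => simp
  | add x y hx hy => rw [map_add, map_add, mul_add, hx, hy]; abel
  | ι_mul x m hx =>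
    rw [map_mul, map_apply_ι, hx, LinearMap.transvection.apply, CliffordAlgebra.contractLeft_ι_mul]
    simp only [map_add, map_smul, add_mul, mul_add, smul_mul_assoc, ← mul_assoc, ι_sq_zero,
      ι_mul_ι_anticomm m v, mul_sub, smul_zero, add_zero, neg_mul, mul_smul_comm]
    abel

theorem contractLeft_ι_mul_ι (f : Module.Dual R M) (s t : M) :
    CliffordAlgebra.contractLeft f (ι R s * ι R t) = f s • ι R t - f t • ι R s := by
  rw [CliffordAlgebra.contractLeft_ι_mul, CliffordAlgebra.contractLeft_ι,
    Algebra.algebraMap_eq_smul_one, mul_smul_comm, mul_one]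

theorem contractLeft_ι_mul_ι_mul_ι (f : Module.Dual R M) (s t u : M) :
    CliffordAlgebra.contractLeft f (ι R s * ι R t * ι R u) =
      f s • (ι R t * ι R u) - f t • (ι R s * ι R u) + f u • (ι R s * ι R t) := by
  rw [mul_assoc, CliffordAlgebra.contractLeft_ι_mul, contractLeft_ι_mul_ι, mul_sub, mul_smul_comm,
    mul_smul_comm]
  abel

end ExteriorAlgebra

theorem Submodule.exists_dual_le_ker_apply_eq {K E : Type*} [Field K] [AddCommGroup E]
    [Module K E] {p : Submodule K E} {x : E} (hx : x ∉ p) (c : K) :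
    ∃ f : Module.Dual K E, p ≤ LinearMap.ker f ∧ f x = c := by
  obtain ⟨f, hfx, hpf⟩ := p.exists_dual_map_eq_bot_of_notMem hx inferInstance
  refine ⟨(c * (f x)⁻¹) • f, fun v hv => ?_, by simp [hfx]⟩
  rw [LinearMap.mem_ker, LinearMap.smul_apply, LinearMap.le_ker_iff_map.2 hpf hv, smul_zero]

theorem wSpan_mono {S T U S' T' U' : Submodule ℂ V} (hS : S ≤ S') (hT : T ≤ T') (hU : U ≤ U') :
    wSpan S T U ≤ wSpan S' T' U' :=
  Submodule.span_mono fun _ ⟨s, hs, t, ht, u, hu, h⟩ => ⟨s, hS hs, t, hT ht, u, hU hu, h⟩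

theorem map_mem_wSpan {W : Type*} [AddCommGroup W] [Module ℂ W] {f : V →ₗ[ℂ] W}
    {S T U : Submodule ℂ V} {S' T' U' : Submodule ℂ W}
    (hS : S ≤ S'.comap f) (hT : T ≤ T'.comap f) (hU : U ≤ U'.comap f) {y : ExteriorAlgebra ℂ V}
    (hy : y ∈ wSpan S T U) : map f y ∈ wSpan S' T' U' := by
  induction hy using Submodule.span_induction with
  | mem x hx =>
    obtain ⟨s, hs, t, ht, u, hu, rfl⟩ := hx
    rw [map_mul, map_mul, map_apply_ι, map_apply_ι, map_apply_ι]
    exact Submodule.subset_span ⟨_, hS hs, _, hT ht, _, hU hu, rfl⟩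
  | zero => simp
  | add x y _ _ hx hy => rw [map_add]; exact add_mem hx hy
  | smul c x _ hx => rw [map_smul]; exact Submodule.smul_mem _ _ hx

theorem fixedDegree_three_le_wSpan_top : ⋀[ℂ]^3 V ≤ wSpan ⊤ ⊤ ⊤ := by
  rw [← ιMulti_span_fixedDegree, Submodule.span_le]
  rintro _ ⟨v, rfl⟩
  refine Submodule.subset_span ⟨v 0, trivial, v 1, trivial, v 2, trivial, ?_⟩
  rw [ιMulti_succ_apply, ιMulti_succ_apply, ιMulti_succ_apply, ιMulti_zero_apply, mul_one,
    mul_assoc]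
  rfl

theorem ι_mul_mem_wSpan (w : V) {S : Submodule ℂ V} {z : ExteriorAlgebra ℂ V}
    (hz : z ∈ wSpan2 S) : ι ℂ w * z ∈ wSpan S S ⊤ := by
  induction hz using Submodule.span_induction with
  | mem x hx =>
    obtain ⟨s, hs, t, ht, rfl⟩ := hx
    rw [← mul_assoc, ι_mul_ι_anticomm w, neg_mul, mul_assoc, ι_mul_ι_anticomm w, mul_neg, neg_neg,
      ← mul_assoc]
    exact Submodule.subset_span ⟨s, hs, t, ht, w, trivial, rfl⟩
  | zero => simp
  | add x y _ _ hx hy => rw [mul_add]; exact add_mem hx hy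
  | smul c x _ hx => rw [mul_smul_comm]; exact Submodule.smul_mem _ _ hx

theorem contractLeft_eq_zero_of_mem_wSpan2 {η : Module.Dual ℂ V} {S : Submodule ℂ V}
    (hS : S ≤ LinearMap.ker η) {z : ExteriorAlgebra ℂ V} (hz : z ∈ wSpan2 S) :
    CliffordAlgebra.contractLeft η z = 0 := by
  induction hz using Submodule.span_induction with
  | mem x hx =>
    obtain ⟨s, hs, t, ht, rfl⟩ := hx
    rw [contractLeft_ι_mul_ι, hS hs, hS ht, zero_smul, zero_smul, sub_zero]
  | zero => simp
  | add x y _ _ hx hy => rw [map_add, hx, hy, add_zero]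
  | smul c x _ hx => rw [map_smul, hx, smul_zero]

theorem contractLeft_eq_zero_of_mem_wSpan {η : Module.Dual ℂ V} {U : Submodule ℂ V}
    (hU : U ≤ LinearMap.ker η) {z : ExteriorAlgebra ℂ V} (hz : z ∈ wSpan U U U) :
    CliffordAlgebra.contractLeft η z = 0 := by
  induction hz using Submodule.span_induction with
  | mem x hx =>
    obtain ⟨s, hs, t, ht, u, hu, rfl⟩ := hx
    rw [contractLeft_ι_mul_ι_mul_ι, hU hs, hU ht, hU hu]
    simp
  | zero => simp
  | add x y _ _ hx hy => rw [map_add, hx, hy, add_zero]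
  | smul c x _ hx => rw [map_smul, hx, smul_zero]

theorem contractLeft_mem_wSpan2 {η : Module.Dual ℂ V} {S : Submodule ℂ V}
    (hS : S ≤ LinearMap.ker η) {z : ExteriorAlgebra ℂ V} (hz : z ∈ wSpan S S ⊤) :
    CliffordAlgebra.contractLeft η z ∈ wSpan2 S := by
  induction hz using Submodule.span_induction with
  | mem x hx =>
    obtain ⟨s, hs, t, ht, u, -, rfl⟩ := hx
    rw [contractLeft_ι_mul_ι_mul_ι, hS hs, hS ht]
    have hst : ι ℂ s * ι ℂ t ∈ wSpan2 S := Submodule.subset_span ⟨s, hs, t, ht, rfl⟩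
    simpa using Submodule.smul_mem _ (η u) hst
  | zero => simp
  | add x y _ _ hx hy => rw [map_add]; exact add_mem hx hy
  | smul c x _ hx => rw [map_smul]; exact Submodule.smul_mem _ _ hx

def ContractsInto (U₄ U₆ : Submodule ℂ V) (y : ExteriorAlgebra ℂ V) : Prop :=
  ∀ η : Module.Dual ℂ V, U₆ ≤ LinearMap.ker η → CliffordAlgebra.contractLeft η y ∈ wSpan2 U₄

theorem contractsInto_of_mem_sup {U₄ U₆ : Submodule ℂ V} (h46 : U₄ ≤ U₆)
    {y : ExteriorAlgebra ℂ V} (hy : y ∈ wSpan U₄ U₄ ⊤ ⊔ wSpan U₆ U₆ U₆) :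
    ContractsInto U₄ U₆ y := by
  intro η hη
  obtain ⟨a, ha, b, hb, rfl⟩ := Submodule.mem_sup.1 hy
  rw [map_add, contractLeft_eq_zero_of_mem_wSpan hη hb, add_zero]
  exact contractLeft_mem_wSpan2 (h46.trans hη) ha

theorem ContractsInto.map_transvection {U₄ U₆ : Submodule ℂ V} (h46 : U₄ ≤ U₆)
    {η : Module.Dual ℂ V} (hη : U₆ ≤ LinearMap.ker η) (w : V) {y : ExteriorAlgebra ℂ V}
    (hy : ContractsInto U₄ U₆ y) : ContractsInto U₄ U₆ (map (LinearMap.transvection η w) y) := by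
  intro η' hη'
  rw [map_transvection_apply, map_add, CliffordAlgebra.contractLeft_ι_mul,
    contractLeft_eq_zero_of_mem_wSpan2 (h46.trans hη') (hy η hη), mul_zero, sub_zero]
  exact add_mem (hy η' hη') (Submodule.smul_mem _ _ (hy η hη))

theorem mem_sup_of_contractsInto [FiniteDimensional ℂ V] {U₄ U₆ : Submodule ℂ V}
    (h46 : U₄ ≤ U₆) {M : Submodule ℂ V} (hM : U₆ ≤ M) {y : ExteriorAlgebra ℂ V}
    (hyM : y ∈ wSpan M M M) (hy : ContractsInto U₄ U₆ y) :
    y ∈ wSpan U₄ U₄ ⊤ ⊔ wSpan U₆ U₆ U₆ := by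
  induction M using WellFoundedLT.induction generalizing y with
  | ind M ih =>
    by_cases hMU : M ≤ U₆
    · exact Submodule.mem_sup_right (wSpan_mono hMU hMU hMU hyM)
    obtain ⟨w, hwM, hwU⟩ := SetLike.not_le_iff_exists.1 hMU
    obtain ⟨η, hη, hηw⟩ := Submodule.exists_dual_le_ker_apply_eq hwU (-1)
    have hlt : M ⊓ LinearMap.ker η < M := by
      refine inf_lt_left.2 fun hle => ?_
      simpa [hηw] using hle hwM
    have hmaps : M ≤ (M ⊓ LinearMap.ker η).comap (LinearMap.transvection η w) := fun v hv =>
      ⟨add_mem hv (Submodule.smul_mem _ _ hwM), by simp [LinearMap.transvection.apply, hηw]⟩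
    have hy' := ih _ hlt (le_inf hM hη) (map_mem_wSpan hmaps hmaps hmaps hyM)
      (hy.map_transvection h46 hη w)
    rw [map_transvection_apply] at hy'
    simpa using sub_mem hy' (Submodule.mem_sup_left (ι_mul_mem_wSpan w (hy η hη)))

theorem mem_Y4_bundle_iff_contraction_general (V₈ : Type*) [AddCommGroup V₈] [Module ℂ V₈]
    (hdim : Module.finrank ℂ V₈ = 8)
    (U₄ U₆ : Submodule ℂ V₈) (h46 : U₄ ≤ U₆)
    (y : ExteriorAlgebra ℂ V₈) (hy : y ∈ ⋀[ℂ]^3 V₈) :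
    y ∈ wSpan U₄ U₄ ⊤ ⊔ wSpan U₆ U₆ U₆ ↔
      ∀ η : Module.Dual ℂ V₈, U₆ ≤ LinearMap.ker η →
        CliffordAlgebra.contractLeft η y ∈ wSpan2 U₄ := by
  have : FiniteDimensional ℂ V₈ := Module.finite_of_finrank_eq_succ hdim
  exact ⟨contractsInto_of_mem_sup h46,
    mem_sup_of_contractsInto h46 le_top (fixedDegree_three_le_wSpan_top hy)⟩

theorem mem_Y4_bundle_iff_contraction (V₈ : Type*) [AddCommGroup V₈] [Module ℂ V₈]
    (hdim : Module.finrank ℂ V₈ = 8)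
    (U₄ U₆ : Submodule ℂ V₈) (h46 : U₄ ≤ U₆)
    (hU4 : Module.finrank ℂ U₄ = 4) (hU6 : Module.finrank ℂ U₆ = 6)
    (y : ExteriorAlgebra ℂ V₈) (hy : y ∈ ⋀[ℂ]^3 V₈) :
    y ∈ wSpan U₄ U₄ ⊤ ⊔ wSpan U₆ U₆ U₆ ↔
      ∀ η : Module.Dual ℂ V₈, U₆ ≤ LinearMap.ker η →
        CliffordAlgebra.contractLeft η y ∈ wSpan2 U₄ :=
  mem_Y4_bundle_iff_contraction_general V₈ hdim U₄ U₆ h46 y hy
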